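/- arXiv:2303.11605 — 2 statements merged into one kernel-verified Lean document; each statement's English description precedes it below -/
import Mathlib

section
/- Let n be a positive integer and let f, h : EuclideanSpace ℝ (Fin n) → ℝ be C² functions with compact support. Then Green's second identity holds: ∫_{ℝⁿ} ( h(x)·Δf(x) − f(x)·Δh(x) ) dx = 0, where Δ denotes the Euclidean Laplacian Δf = Σ_{i=1}^n ∂²f/∂x_i². -/
/-!
Integrating by parts once in a direction `v` (the boundary term vanishes by compact support)
turns `∫ h ∂ᵥ²f` into `-∫ ∂ᵥh ∂ᵥf`, which is symmetric in `f` and `h`. Summing over the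
coordinate directions gives `∫ h Δf = ∫ f Δh`.
-/

open Real MeasureTheory

/-- The Euclidean Laplacian `Δf(x) = Σᵢ ∂²f/∂xᵢ²(x)` of `f : ℝⁿ → ℝ`. -/
noncomputable def euclideanLaplacian {n : ℕ} (f : EuclideanSpace ℝ (Fin n) → ℝ)
    (x : EuclideanSpace ℝ (Fin n)) : ℝ :=
  ∑ i : Fin n,
    fderiv ℝ (fun y => fderiv ℝ f y (EuclideanSpace.single i 1)) x
      (EuclideanSpace.single i 1)

section SecondDirectionalDerivative

variable {E : Type*} [NormedAddCommGroup E] [NormedSpace ℝ E] {f h : E → ℝ}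

theorem ContDiff.contDiff_fderiv_apply_const (hf : ContDiff ℝ 2 f) (v : E) :
    ContDiff ℝ 1 fun y => fderiv ℝ f y v :=
  (hf.fderiv_right one_add_one_eq_two.le).clm_apply contDiff_const

theorem ContDiff.continuous_fderiv_apply_const (hf : ContDiff ℝ 1 f) (v : E) :
    Continuous fun y => fderiv ℝ f y v :=
  (hf.continuous_fderiv one_ne_zero).clm_apply continuous_const

variable [MeasurableSpace E] [BorelSpace E] {μ : Measure E}

theorem integrable_mul_fderiv_fderiv_apply [IsFiniteMeasureOnCompacts μ] (hh : Continuous h)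
    (hf : ContDiff ℝ 2 f) (hfs : HasCompactSupport f) (v w : E) :
    Integrable (fun x => h x * fderiv ℝ (fun y => fderiv ℝ f y v) x w) μ :=
  (hh.mul ((hf.contDiff_fderiv_apply_const v).continuous_fderiv_apply_const w)
    ).integrable_of_hasCompactSupport
      ((hfs.fderiv_apply (𝕜 := ℝ) v).fderiv_apply (𝕜 := ℝ) w).mul_left

variable [FiniteDimensional ℝ E] [μ.IsAddHaarMeasure]

theorem integral_mul_fderiv_fderiv_eq_neg (hh : ContDiff ℝ 1 h) (hf : ContDiff ℝ 2 f)
    (hfs : HasCompactSupport f) (v : E) :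
    ∫ x, h x * fderiv ℝ (fun y => fderiv ℝ f y v) x v ∂μ =
      -∫ x, fderiv ℝ h x v * fderiv ℝ f x v ∂μ := by
  have hDf := hf.contDiff_fderiv_apply_const v
  have hDfs := hfs.fderiv_apply (𝕜 := ℝ) v
  exact integral_mul_fderiv_eq_neg_fderiv_mul_of_integrable
    (((hh.continuous_fderiv_apply_const v).mul hDf.continuous).integrable_of_hasCompactSupport
      hDfs.mul_left)
    (integrable_mul_fderiv_fderiv_apply hh.continuous hf hfs v v)
    ((hh.continuous.mul hDf.continuous).integrable_of_hasCompactSupport hDfs.mul_left)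
    (fun x _ => hh.differentiable one_ne_zero x) (fun x _ => hDf.differentiable one_ne_zero x)

theorem integral_mul_fderiv_fderiv_comm (hf : ContDiff ℝ 2 f) (hh : ContDiff ℝ 2 h)
    (hfs : HasCompactSupport f) (hhs : HasCompactSupport h) (v : E) :
    ∫ x, h x * fderiv ℝ (fun y => fderiv ℝ f y v) x v ∂μ =
      ∫ x, f x * fderiv ℝ (fun y => fderiv ℝ h y v) x v ∂μ := by
  rw [integral_mul_fderiv_fderiv_eq_neg (hh.of_le one_le_two) hf hfs,
    integral_mul_fderiv_fderiv_eq_neg (hf.of_le one_le_two) hh hhs]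
  simp_rw [mul_comm]

end SecondDirectionalDerivative

section EuclideanLaplacian

variable {n : ℕ} {f h : EuclideanSpace ℝ (Fin n) → ℝ}

theorem mul_euclideanLaplacian_eq_sum :
    (fun x => h x * euclideanLaplacian f x) = fun x => ∑ i : Fin n,
      h x * fderiv ℝ (fun y => fderiv ℝ f y (EuclideanSpace.single i 1)) x
        (EuclideanSpace.single i 1) :=
  funext fun _ => Finset.mul_sum _ _ _

theorem integrable_mul_euclideanLaplacian (hh : Continuous h) (hf : ContDiff ℝ 2 f)
    (hfs : HasCompactSupport f) :
    Integrable fun x => h x * euclideanLaplacian f x := by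
  rw [mul_euclideanLaplacian_eq_sum]
  exact integrable_finsetSum _ fun i _ => integrable_mul_fderiv_fderiv_apply hh hf hfs _ _

theorem integral_mul_euclideanLaplacian (hh : Continuous h) (hf : ContDiff ℝ 2 f)
    (hfs : HasCompactSupport f) :
    ∫ x, h x * euclideanLaplacian f x = ∑ i : Fin n,
      ∫ x, h x * fderiv ℝ (fun y => fderiv ℝ f y (EuclideanSpace.single i 1)) x
        (EuclideanSpace.single i 1) := by
  rw [mul_euclideanLaplacian_eq_sum]
  exact integral_finsetSum _ fun i _ => integrable_mul_fderiv_fderiv_apply hh hf hfs _ _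

end EuclideanLaplacian

theorem stmt_14_general (n : ℕ)
    (f h : EuclideanSpace ℝ (Fin n) → ℝ)
    (hf : ContDiff ℝ 2 f) (hh : ContDiff ℝ 2 h)
    (hfsupp : HasCompactSupport f) (hhsupp : HasCompactSupport h) :
    ∫ x, (h x * euclideanLaplacian f x - f x * euclideanLaplacian h x) = 0 := by
  rw [integral_sub (integrable_mul_euclideanLaplacian hh.continuous hf hfsupp)
      (integrable_mul_euclideanLaplacian hf.continuous hh hhsupp),
    integral_mul_euclideanLaplacian hh.continuous hf hfsupp,
    integral_mul_euclideanLaplacian hf.continuous hh hhsupp, sub_eq_zero]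
  exact Finset.sum_congr rfl fun i _ => integral_mul_fderiv_fderiv_comm hf hh hfsupp hhsupp _

/-- **Green's second identity.** For `f, h` `C²` functions on `ℝⁿ` with
compact support, `∫ (h·Δf − f·Δh) dx = 0`. -/
theorem stmt_14 (n : ℕ) (hn : 0 < n)
    (f h : EuclideanSpace ℝ (Fin n) → ℝ)
    (hf : ContDiff ℝ 2 f) (hh : ContDiff ℝ 2 h)
    (hfsupp : HasCompactSupport f) (hhsupp : HasCompactSupport h) :
    ∫ x, (h x * euclideanLaplacian f x - f x * euclideanLaplacian h x) = 0 :=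
  stmt_14_general n f h hf hh hfsupp hhsupp
end

section
/- Let H be a real Hilbert space, T : H → H a bounded self-adjoint linear operator, (φ_j)_{j∈ℕ} a Hilbert basis of H, and λ : ℕ → ℝ a monotone nondecreasing sequence with T φ_j = λ_j · φ_j for every j. Fix k ≥ 1 and suppose ψ_1, …, ψ_k ∈ H are orthonormal and satisfy ⟨T ψ_i, ψ_j⟩ = 0 for i ≠ j and ⟨T ψ_j, ψ_j⟩ = ν_j with ν_1 ≤ ν_2 ≤ ⋯ ≤ ν_k. Then λ_{k−1} ≤ ν_k: the k-th eigenvalue of T is bounded above by the k-th Rayleigh value of any T-orthogonal orthonormal family of test vectors (domain monotonicity of Dirichlet eigenvalues). -/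
open scoped RealInnerProductSpace

/-- **domain monotonicity.** Let `T` be a bounded self-adjoint operator on
a real Hilbert space `H`, `(φ_j)` a Hilbert basis of eigenvectors with nondecreasing
eigenvalues `λ_j`.  If `ψ_1, …, ψ_k` (`k = m + 1 ≥ 1`) are orthonormal, `T`-orthogonal
(`⟨T ψ_i, ψ_j⟩ = 0` for `i ≠ j`) with Rayleigh values `ν_j = ⟨T ψ_j, ψ_j⟩` listed in
nondecreasing order, then `λ_{k−1} ≤ ν_k`. -/
theorem stmt_17 {H : Type*} [NormedAddCommGroup H] [InnerProductSpace ℝ H]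
    [CompleteSpace H]
    (T : H →L[ℝ] H) (hT : ∀ x y : H, ⟪T x, y⟫ = ⟪x, T y⟫)
    (φ : HilbertBasis ℕ ℝ H) (lam : ℕ → ℝ) (hmono : Monotone lam)
    (heig : ∀ j : ℕ, T (φ j) = lam j • φ j)
    (m : ℕ) (ψ : Fin (m + 1) → H) (hortho : Orthonormal ℝ ψ)
    (ν : Fin (m + 1) → ℝ) (hν : Monotone ν)
    (hToff : ∀ i j : Fin (m + 1), i ≠ j → ⟪T (ψ i), ψ j⟫ = 0)
    (hTdiag : ∀ j : Fin (m + 1), ⟪T (ψ j), ψ j⟫ = ν j) :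
    lam m ≤ ν (Fin.last m) := by
  classical
  have hite := orthonormal_iff_ite.mp hortho
  -- Linear map whose kernel gives coefficients orthogonal to φ 0, ..., φ (m-1)
  let L : (Fin (m + 1) → ℝ) →ₗ[ℝ] (Fin m → ℝ) :=
    { toFun := fun a j => ∑ i, a i * ⟪ψ i, φ (j : ℕ)⟫
      map_add' := by
        intro a b; funext j; simp [add_mul, Finset.sum_add_distrib]
      map_smul' := by
        intro c a; funext j; simp [Finset.mul_sum, mul_assoc] }
  have hLnotinj : ¬ Function.Injective L := by
    intro hinj
    have := LinearMap.finrank_le_finrank_of_injective hinj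
    simp [Module.finrank_fin_fun] at this
  obtain ⟨x, y, hxy, hne⟩ := Function.not_injective_iff.mp hLnotinj
  set a : Fin (m + 1) → ℝ := x - y with ha
  have haL : L a = 0 := by rw [ha, map_sub, hxy, sub_self]
  have hane : a ≠ 0 := sub_ne_zero.mpr hne
  set f : H := ∑ i, a i • ψ i with hf
  have hfne : f ≠ 0 := by
    intro h
    apply hane
    have hli := hortho.linearIndependent
    have := Fintype.linearIndependent_iff.mp hli a h
    funext i; exact this i
  -- orthogonality to low eigenvectors
  have hperp : ∀ j : ℕ, j < m → ⟪φ j, f⟫ = 0 := by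
    intro j hj
    have h0 : L a ⟨j, hj⟩ = 0 := by rw [haL]; rfl
    have h1 : ⟪f, φ j⟫ = ∑ i, a i * ⟪ψ i, φ j⟫ := by
      rw [hf, sum_inner]
      simp [real_inner_smul_left]
    rw [real_inner_comm, h1]
    exact h0
  -- coefficients of f
  set c : ℕ → ℝ := fun j => ⟪φ j, f⟫ with hc
  -- Parseval-type identities
  have hTff : ⟪T f, f⟫ = ∑' j : ℕ, lam j * (c j * c j) := by
    rw [← φ.tsum_inner_mul_inner (T f) f]
    refine tsum_congr fun j => ?_
    simp only [hc]
    rw [hT f (φ j), heig j, real_inner_smul_right, real_inner_comm f (φ j)]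
    ring
  have hff : ⟪f, f⟫ = ∑' j : ℕ, c j * c j := by
    rw [← φ.tsum_inner_mul_inner f f]
    refine tsum_congr fun j => ?_
    simp only [hc]
    rw [real_inner_comm f (φ j)]
  -- summability
  have hsum1 : Summable (fun j : ℕ => lam j * (c j * c j)) := by
    refine (φ.summable_inner_mul_inner (T f) f).congr fun j => ?_
    simp only [hc]
    rw [hT f (φ j), heig j, real_inner_smul_right, real_inner_comm f (φ j)]
    ring
  have hsum2 : Summable (fun j : ℕ => c j * c j) := by
    refine (φ.summable_inner_mul_inner f f).congr fun j => ?_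
    simp only [hc]
    rw [real_inner_comm f (φ j)]
  -- lower bound
  have hlow : lam m * ⟪f, f⟫ ≤ ⟪T f, f⟫ := by
    rw [hff, hTff, ← tsum_mul_left]
    refine Summable.tsum_le_tsum (fun j => ?_) (hsum2.mul_left _) hsum1
    rcases lt_or_ge j m with hj | hj
    · have h0 : c j = 0 := by simp only [hc]; exact hperp j hj
      rw [h0]; simp
    · have := hmono hj
      nlinarith [mul_self_nonneg (c j)]
  -- expand the double sum
  have hTff2 : ⟪T f, f⟫ = ∑ i, a i * a i * ν i := by
    rw [hf, map_sum, sum_inner]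
    refine Finset.sum_congr rfl fun i _ => ?_
    rw [map_smul, real_inner_smul_left, inner_sum]
    simp_rw [real_inner_smul_right]
    rw [Finset.sum_eq_single i]
    · rw [hTdiag]; ring
    · intro j _ hji; rw [hToff i j (Ne.symm hji)]; ring
    · intro h; exact absurd (Finset.mem_univ i) h
  have hff2 : ⟪f, f⟫ = ∑ i, a i * a i := by
    rw [hf, sum_inner]
    refine Finset.sum_congr rfl fun i _ => ?_
    rw [real_inner_smul_left, inner_sum]
    simp_rw [real_inner_smul_right, hite]
    rw [Finset.sum_eq_single i]
    · simp
    · intro j _ hji; simp [(Ne.symm hji)]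
    · intro h; exact absurd (Finset.mem_univ i) h
  -- upper bound
  have hup : ⟪T f, f⟫ ≤ ν (Fin.last m) * ⟪f, f⟫ := by
    rw [hTff2, hff2, Finset.mul_sum]
    refine Finset.sum_le_sum fun i _ => ?_
    have h1 : ν i ≤ ν (Fin.last m) := hν (Fin.le_last i)
    nlinarith [mul_self_nonneg (a i)]
  have hpos : 0 < ⟪f, f⟫ := by
    rw [real_inner_self_eq_norm_sq]
    exact pow_pos (norm_pos_iff.mpr hfne) 2
  have := hlow.trans hup
  exact le_of_mul_le_mul_right (by linarith) hpos
end
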